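/- arXiv:1806.10365 — 5 statements merged into one kernel-verified Lean document; each statement's English description precedes it below -/
import Mathlib

section
/- Given any pair of distinct points p, q from βX \ υX, there exists a function f ∈ O^p such that f*(q) = ∞, where O^p = {g ∈ C(X) : p lies in the βX-interior of the βX-closure of the zero-set Z(g)}. -/
/-!
Since `q ∉ υX`, some `g ∈ C(X)` has `g*(q) = ∞`. Urysohn's lemma in the normal space `βX` gives
`k : βX → [0, 1]` vanishing on a neighbourhood `L` of `p` and equal to `1` on a neighbourhood `K`
of `q`. Then `f = (k ∘ ι) · g` vanishes on `ι⁻¹ L`, whose closure contains the neighbourhood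
`int L` of `p` because `X` is dense in `βX`; and `f = g` on `ι⁻¹ K`, so by density again the
continuous extensions `f*` and `g*` agree at `q`.
-/

open Filter Topology

variable {X : Type*} [TopologicalSpace X]

noncomputable def fstar (f : C(X, ℝ)) : StoneCech X → OnePoint ℝ :=
  stoneCechExtend (OnePoint.continuous_coe.comp f.continuous)

def Cp (p : StoneCech X) : Set C(X, ℝ) :=
  {f : C(X, ℝ) | ∃ r : ℝ, fstar f p = (r : OnePoint ℝ)}

def upsilon (X : Type*) [TopologicalSpace X] : Set (StoneCech X) :=
  {p | ∀ f : C(X, ℝ), ∃ r : ℝ, fstar f p = (r : OnePoint ℝ)}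

section DenseRange

variable {α β γ : Type*} [TopologicalSpace β] [TopologicalSpace γ] {e : α → β}

theorem DenseRange.mem_interior_closure_image_preimage (he : DenseRange e) {s : Set β} {b : β}
    (hs : s ∈ 𝓝 b) : b ∈ interior (closure (e '' (e ⁻¹' s))) := by
  have hsub : interior s ⊆ closure (e '' (e ⁻¹' s)) := by
    calc interior s ⊆ closure (interior s ∩ Set.range e) :=
          he.open_subset_closure_inter isOpen_interior
      _ = closure (e '' (e ⁻¹' interior s)) := by rw [Set.image_preimage_eq_inter_range]
      _ ⊆ closure (e '' (e ⁻¹' s)) :=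
          closure_mono (Set.image_mono (Set.preimage_mono interior_subset))
  exact interior_maximal hsub isOpen_interior (mem_interior_iff_mem_nhds.2 hs)

theorem DenseRange.eq_of_comp_eqOn_preimage [T2Space γ] (he : DenseRange e) {φ ψ : β → γ}
    (hφ : Continuous φ) (hψ : Continuous ψ) {s : Set β} {b : β} (hs : s ∈ 𝓝 b)
    (h : Set.EqOn (φ ∘ e) (ψ ∘ e) (e ⁻¹' s)) : φ b = ψ b := by
  have heq : Set.EqOn φ ψ (e '' (e ⁻¹' s)) := by
    rintro _ ⟨a, ha, rfl⟩
    exact h ha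
  exact heq.closure hφ hψ (interior_subset (he.mem_interior_closure_image_preimage hs))

end DenseRange

theorem exists_continuous_eventuallyEq_zero_one {Y : Type*} [TopologicalSpace Y] [T4Space Y]
    {p q : Y} (hpq : p ≠ q) : ∃ k : C(Y, ℝ), k =ᶠ[𝓝 p] 0 ∧ k =ᶠ[𝓝 q] 1 := by
  obtain ⟨L, ⟨hL, hLc⟩, K, ⟨hK, hKc⟩, hLK⟩ :=
    ((closed_nhds_basis p).disjoint_iff (closed_nhds_basis q)).1 (disjoint_nhds_nhds.2 hpq)
  obtain ⟨k, hk0, hk1, -⟩ := exists_continuous_zero_one_of_isClosed hLc hKc hLK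
  exact ⟨k, mem_of_superset hL hk0, mem_of_superset hK hk1⟩

theorem fstar_stoneCechUnit (f : C(X, ℝ)) (x : X) : fstar f (stoneCechUnit x) = f x :=
  congrFun (stoneCechExtend_extends _) x

theorem continuous_fstar (f : C(X, ℝ)) : Continuous (fstar f) :=
  continuous_stoneCechExtend _

theorem exists_fstar_eq_infty_of_notMem_upsilon {q : StoneCech X} (hq : q ∉ upsilon X) :
    ∃ g : C(X, ℝ), fstar g q = OnePoint.infty := by
  simp only [upsilon, Set.mem_ofPred_eq, not_forall] at hq
  obtain ⟨g, hg⟩ := hq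
  refine ⟨g, ?_⟩
  cases h : fstar g q with
  | infty => rfl
  | coe r => exact absurd ⟨r, h⟩ hg

theorem statement1_general (p q : StoneCech X)
    (hq : q ∉ upsilon X) (hpq : p ≠ q) :
    ∃ f : C(X, ℝ),
      p ∈ interior (closure (stoneCechUnit '' {x : X | f x = 0})) ∧
      fstar f q = OnePoint.infty := by
  obtain ⟨g, hg⟩ := exists_fstar_eq_infty_of_notMem_upsilon hq
  obtain ⟨k, hk0, hk1⟩ := exists_continuous_eventuallyEq_zero_one hpq
  let ι : C(X, StoneCech X) := ⟨stoneCechUnit, continuous_stoneCechUnit⟩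
  refine ⟨k.comp ι * g, ?_, ?_⟩
  · refine interior_mono (closure_mono (Set.image_mono ?_))
      (denseRange_stoneCechUnit.mem_interior_closure_image_preimage hk0)
    intro x (hx : k (stoneCechUnit x) = 0)
    simp [ι, hx]
  · rw [← hg]
    refine denseRange_stoneCechUnit.eq_of_comp_eqOn_preimage (continuous_fstar _)
      (continuous_fstar _) hk1 fun x (hx : k (stoneCechUnit x) = 1) => ?_
    simp [fstar_stoneCechUnit, ι, hx]

/-- Given any pair of distinct points `p, q ∈ βX \ υX`, there exists `f ∈ Oᵖ` (i.e. `p` lies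
in the `βX`-interior of the `βX`-closure of the zero-set `Z(f)`) with `f*(q) = ∞`. -/
theorem statement1 [T2Space X] [CompletelyRegularSpace X] (p q : StoneCech X)
    (hp : p ∉ upsilon X) (hq : q ∉ upsilon X) (hpq : p ≠ q) :
    ∃ f : C(X, ℝ),
      p ∈ interior (closure (stoneCechUnit '' {x : X | f x = 0})) ∧
      fstar f q = OnePoint.infty :=
  statement1_general p q hq hpq
end

section
/- If X is a completely regular Hausdorff space that is not pseudocompact, then βX \ υX contains a homeomorphic copy of βℕ \ ℕ, and consequently |βX \ υX| ≥ 2^c. -/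
open Filter Topology

variable {X : Type*} [TopologicalSpace X]

/-!
An unbounded `f ∈ C(X)` yields points `xₙ` along which `|f|` increases by at least `1` at each
step. By Tietze's theorem on `ℝ`, every `g : ℕ → [0,1]` equals `ψ ∘ |f|` on the `xₙ` for some
continuous `ψ`; extending these functions to `βX` separates the images of any two points of
`βℕ`, so the Stone–Čech extension `βℕ → βX` of the sequence is a closed embedding. At a point of
`βℕ \ ℕ` the extension of `f` is the limit of `f xₙ` along the cofinite filter, which is `∞`;
so `βℕ \ ℕ` lands in `βX \ υX`.

For `|βℕ \ ℕ| ≥ 2^𝔠`, take an independent family `(A_X)` of subsets of `ℕ` indexed by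
`X ⊆ ℕ`. For each `σ`, the sets `A_X` (`X ∈ σ`), their complements (`X ∉ σ`) and the cofinite
sets have the finite intersection property; limits in `βℕ` of ultrafilters containing them are
free points, and distinct `σ` give distinct points since the extension of the indicator of
`A_X` reads off whether `X ∈ σ`.
-/

open Function Set Cardinal

def IsIndependentFamily {ι α : Type*} (A : ι → Set α) : Prop :=
  ∀ (T : Finset ι) (σ : Set ι), {a | ∀ i ∈ T, (a ∈ A i ↔ i ∈ σ)}.Infinite

namespace IsIndependentFamily

variable {ι α β : Type*} {A : ι → Set α}

theorem preimage_equiv (hA : IsIndependentFamily A) (e : β ≃ α) :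
    IsIndependentFamily fun i => e ⁻¹' A i := fun T σ =>
  (hA T σ).preimage (by simp)

theorem exists_ultrafilter (hA : IsIndependentFamily A) (σ : Set ι) :
    ∃ U : Ultrafilter α, (U : Filter α) ≤ cofinite ∧
      ∀ i, ∀ᶠ a in (U : Filter α), a ∈ A i ↔ i ∈ σ := by
  set pattern : ι → Set α := fun i => {a | a ∈ A i ↔ i ∈ σ}
  have : ((⨅ i, 𝓟 (pattern i)) ⊓ cofinite).NeBot := by
    refine inf_neBot_iff_frequently_left.2 fun {p} hp => ?_
    obtain ⟨T, hT, hTp⟩ := (hasBasis_iInf_principal_finite pattern).mem_iff.1 hp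
    refine frequently_cofinite_iff_infinite.2 ((hA hT.toFinset σ).mono fun a ha => hTp ?_)
    simpa [pattern] using ha
  have hU := Ultrafilter.of_le ((⨅ i, 𝓟 (pattern i)) ⊓ cofinite)
  exact ⟨_, hU.trans inf_le_right, fun i =>
    hU.trans inf_le_left (mem_iInf_of_mem i (mem_principal_self _))⟩

end IsIndependentFamily

open Classical in
noncomputable def truncation (N : ℕ) (X : Set ℕ) : Finset ℕ :=
  (Finset.range N).filter (· ∈ X)

def truncationFamily (X : Set ℕ) : Set (ℕ × Finset (Finset ℕ)) :=
  {p | truncation p.1 X ∈ p.2}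

theorem eventually_injOn_truncation (T : Finset (Set ℕ)) :
    ∀ᶠ N in atTop, InjOn (truncation N) T := by
  suffices ∀ᶠ N in atTop, ∀ X ∈ T, ∀ Y ∈ T, truncation N X = truncation N Y → X = Y from
    this.mono fun N hN X hX Y hY => hN X hX Y hY
  refine (eventually_all_finset T).2 fun X _ => (eventually_all_finset T).2 fun Y _ => ?_
  by_cases hXY : X = Y
  · exact Eventually.of_forall fun _ _ => hXY
  obtain ⟨k, hk⟩ : ∃ k, ¬ (k ∈ X ↔ k ∈ Y) := by
    by_contra! h
    exact hXY (Set.ext h)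
  filter_upwards [eventually_gt_atTop k] with N hN hXYN
  exact absurd (by simpa [truncation, hN] using congrArg (k ∈ ·) hXYN) hk

/- Finitely many distinct `X` have distinct truncations at every large `N`; for such `N`, the code
`(N, truncations of the X ∈ σ)` lies in exactly the members indexed by `σ`. -/
theorem isIndependentFamily_truncationFamily : IsIndependentFamily truncationFamily := by
  classical
  intro T σ
  set code : ℕ → ℕ × Finset (Finset ℕ) := fun N => (N, (T.filter (· ∈ σ)).image (truncation N))
  have hgood : {N | InjOn (truncation N) T}.Infinite :=
    Nat.frequently_atTop_iff_infinite.1 (eventually_injOn_truncation T).frequently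
  refine (hgood.image (f := code) fun _ _ _ _ h => congrArg Prod.fst h).mono ?_
  rintro _ ⟨N, hN, rfl⟩ X hX
  simp only [truncationFamily, code, mem_ofPred_eq, Finset.mem_image, Finset.mem_filter]
  constructor
  · rintro ⟨Y, ⟨hY, hYσ⟩, hYX⟩
    rwa [← hN hY hX hYX]
  · exact fun hXσ => ⟨X, ⟨hX, hXσ⟩, rfl⟩

theorem exists_isIndependentFamily_nat : ∃ A : Set ℕ → Set ℕ, IsIndependentFamily A := by
  have : Denumerable (ℕ × Finset (Finset ℕ)) := Denumerable.ofEncodableOfInfinite _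
  exact ⟨_, isIndependentFamily_truncationFamily.preimage_equiv (Denumerable.eqv _).symm⟩

theorem exists_seq_mem_add_one_le_of_not_bddAbove {S : Set ℝ} (hS : ¬ BddAbove S) :
    ∃ s : ℕ → ℝ, (∀ n, s n ∈ S) ∧ ∀ n, s n + 1 ≤ s (n + 1) := by
  choose g hgS hg using not_bddAbove_iff.1 hS
  let s : ℕ → ℝ := fun n => Nat.rec (g 0) (fun _ t => g (t + 1)) n
  refine ⟨s, fun n => ?_, fun n => (hg _).le⟩
  cases n <;> exact hgS _

theorem pairwise_one_le_dist_of_add_one_le {s : ℕ → ℝ} (hs : ∀ n, s n + 1 ≤ s (n + 1)) :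
    Pairwise fun m n => 1 ≤ dist (s m) (s n) := by
  have hmono : Monotone s := monotone_nat_of_le_succ fun n => by linarith [hs n]
  have key : ∀ m n, m < n → 1 ≤ dist (s m) (s n) := fun m n hmn => by
    rw [Real.dist_eq, abs_sub_comm]
    linarith [(hs m).trans (hmono hmn), le_abs_self (s n - s m)]
  intro m n hmn
  rcases hmn.lt_or_gt with h | h
  · exact key m n h
  · exact dist_comm (s m) (s n) ▸ key n m h

theorem tendsto_atTop_of_add_one_le {s : ℕ → ℝ} (hs : ∀ n, s n + 1 ≤ s (n + 1)) :
    Tendsto s atTop atTop := by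
  have hlin : ∀ n : ℕ, s 0 + n ≤ s n := fun n => by
    induction n with
    | zero => simp
    | succ n ih => push_cast; linarith [hs n]
  exact tendsto_atTop_mono hlin (tendsto_atTop_add_const_left _ _ tendsto_natCast_atTop_atTop)

theorem tendsto_coe_infty_of_tendsto_abs_atTop {β : Type*} {l : Filter β} {u : β → ℝ}
    (hu : Tendsto (fun b => |u b|) l atTop) :
    Tendsto (fun b => (u b : OnePoint ℝ)) l (𝓝 OnePoint.infty) := by
  refine (coclosedCompact_eq_cocompact (X := ℝ) ▸ OnePoint.tendsto_coe_infty).comp ?_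
  exact tendsto_cocompact_of_tendsto_dist_comp_atTop 0 (by simpa [Real.dist_eq] using hu)

theorem exists_seq_pairwise_one_le_dist_abs_of_unbounded {f : C(X, ℝ)}
    (hf : ¬ ∃ M : ℝ, ∀ x, |f x| ≤ M) :
    ∃ x : ℕ → X, (Pairwise fun m n => 1 ≤ dist |f (x m)| |f (x n)|) ∧
      Tendsto (fun n => |f (x n)|) atTop atTop := by
  have hS : ¬ BddAbove (range fun x => |f x|) := by
    rintro ⟨M, hM⟩
    exact hf ⟨M, fun x => hM ⟨x, rfl⟩⟩
  obtain ⟨s, hsS, hs⟩ := exists_seq_mem_add_one_le_of_not_bddAbove hS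
  choose x hx using hsS
  refine ⟨x, ?_, ?_⟩ <;> simp only [hx]
  exacts [pairwise_one_le_dist_of_add_one_le hs, tendsto_atTop_of_add_one_le hs]

section StoneCech

variable {α Y : Type*} [TopologicalSpace α] [TopologicalSpace Y] [T2Space Y] [CompactSpace Y]

open unitInterval

theorem clusterPt_map_stoneCechUnit_cofinite {p : StoneCech α}
    (hp : p ∉ range (stoneCechUnit : α → StoneCech α)) :
    ClusterPt p (map stoneCechUnit cofinite) := by
  refine clusterPt_iff_forall_mem_closure.2 fun s hs => ?_
  have hfin : (stoneCechUnit '' (stoneCechUnit ⁻¹' s)ᶜ : Set (StoneCech α)).Finite :=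
    Set.Finite.image _ hs
  have hsub : range (stoneCechUnit : α → StoneCech α) ⊆
      s ∪ stoneCechUnit '' (stoneCechUnit ⁻¹' s)ᶜ := by
    rintro _ ⟨a, rfl⟩
    by_cases ha : stoneCechUnit a ∈ s
    exacts [Or.inl ha, Or.inr ⟨a, ha, rfl⟩]
  have hcl := closure_mono hsub (denseRange_stoneCechUnit p)
  rw [closure_union, hfin.isClosed.closure_eq] at hcl
  exact hcl.resolve_right fun ⟨a, _, ha⟩ => hp ⟨a, ha⟩

theorem stoneCechExtend_eq_of_clusterPt {u : α → Y} (hu : Continuous u) {l : Filter α}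
    {p : StoneCech α} {y : Y} (hp : ClusterPt p (map stoneCechUnit l))
    (hul : Tendsto u l (𝓝 y)) : stoneCechExtend hu p = y :=
  eq_of_nhds_neBot <| hp.map (continuous_stoneCechExtend hu).continuousAt <| by
    rwa [tendsto_map'_iff, stoneCechExtend_extends]

theorem stoneCechExtend_comp_stoneCechExtend {x : α → X} (hx : Continuous x) {φ : X → Y}
    (hφ : Continuous φ) :
    stoneCechExtend hφ ∘ stoneCechExtend (continuous_stoneCechUnit.comp hx) =
      stoneCechExtend (hφ.comp hx) :=
  stoneCech_hom_ext ((continuous_stoneCechExtend _).comp (continuous_stoneCechExtend _))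
    (continuous_stoneCechExtend _) (by ext a; simp)

theorem injective_stoneCechExtend_of_forall_exists_comp_eq {x : α → X} (hx : Continuous x)
    (hext : ∀ g : C(α, I), ∃ G : C(X, I), ⇑G ∘ x = g) :
    Injective (stoneCechExtend (continuous_stoneCechUnit.comp hx)) := by
  intro p q hpq
  by_contra hne
  obtain ⟨γ, hγ, hγp, hγq⟩ :=
    CompletelyRegularSpace.completely_regular p {q} isClosed_singleton hne
  obtain ⟨G, hG⟩ := hext ⟨γ ∘ stoneCechUnit, hγ.comp continuous_stoneCechUnit⟩
  have hγG : stoneCechExtend G.continuous ∘ stoneCechExtend (continuous_stoneCechUnit.comp hx) =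
      γ := by
    rw [stoneCechExtend_comp_stoneCechExtend hx]
    exact stoneCech_hom_ext (continuous_stoneCechExtend _) hγ (by simpa using hG)
  have hγpq : γ p = γ q := by
    rw [← hγG]
    exact congrArg (stoneCechExtend G.continuous) hpq
  rw [hγp, hγq rfl] at hγpq
  exact zero_ne_one hγpq

theorem exists_comp_eq_of_pairwise_le_dist [DiscreteTopology α] {F : X → ℝ} (hF : Continuous F)
    {x : α → X} {ε : ℝ} (hε : 0 < ε) (hx : Pairwise fun m n => ε ≤ dist (F (x m)) (F (x n)))
    (g : C(α, I)) : ∃ G : C(X, I), ⇑G ∘ x = g := by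
  obtain ⟨ψ, hψ⟩ := g.exists_extension' (Metric.isClosedEmbedding_of_pairwise_le_dist hε hx)
  exact ⟨ψ.comp ⟨F, hF⟩, hψ⟩

end StoneCech

theorem two_pow_continuum_le_mk_compl_range_stoneCechUnit :
    2 ^ 𝔠 ≤ #((range (stoneCechUnit : ℕ → StoneCech ℕ))ᶜ : Set (StoneCech ℕ)) := by
  obtain ⟨A, hA⟩ := exists_isIndependentFamily_nat
  choose U hU_free hUA using hA.exists_ultrafilter
  set p : Set (Set ℕ) → StoneCech ℕ := fun σ => (Ultrafilter.map stoneCechUnit (U σ)).lim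
  have hp : ∀ σ, ClusterPt (p σ) (map stoneCechUnit (U σ)) := fun σ =>
    ClusterPt.of_le_nhds (Ultrafilter.le_nhds_lim (Ultrafilter.map stoneCechUnit (U σ)))
  have hp_free : ∀ σ, p σ ∉ range stoneCechUnit := by
    rintro σ ⟨n, hn⟩
    have hcont := continuous_of_discreteTopology (f := fun k : ℕ => decide (k = n))
    have hn_false : stoneCechExtend hcont (p σ) = false :=
      stoneCechExtend_eq_of_clusterPt hcont (hp σ) <| tendsto_nhds_of_eventually_eq <|
        Eventually.mono (hU_free σ (eventually_cofinite_ne n)) fun k hk => by simpa using hk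
    rw [← hn, stoneCechExtend_stoneCechUnit] at hn_false
    simp at hn_false
  have hp_inj : Injective p := by
    classical
    intro σ τ hστ
    ext i
    have hcont := continuous_of_discreteTopology (f := fun k : ℕ => decide (k ∈ A i))
    have hval : ∀ σ, stoneCechExtend hcont (p σ) = decide (i ∈ σ) := fun σ =>
      stoneCechExtend_eq_of_clusterPt hcont (hp σ) <| tendsto_nhds_of_eventually_eq <|
        (hUA σ i).mono fun k hk => by simpa using hk
    exact decide_eq_decide.1 ((hval σ).symm.trans (hστ ▸ hval τ))
  calc 2 ^ 𝔠 = #(Set (Set ℕ)) := by rw [mk_set, mk_set, mk_nat, two_power_aleph0]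
    _ ≤ _ := mk_le_of_injective (f := fun σ => ⟨p σ, hp_free σ⟩)
      fun σ τ h => hp_inj (congrArg Subtype.val h)

theorem exists_isEmbedding_compl_range_stoneCechUnit_compl_upsilon {f : C(X, ℝ)}
    (hf : ¬ ∃ M : ℝ, ∀ x, |f x| ≤ M) :
    ∃ e : ((range (stoneCechUnit : ℕ → StoneCech ℕ))ᶜ : Set (StoneCech ℕ)) →
      ((upsilon X)ᶜ : Set (StoneCech X)), IsEmbedding e := by
  obtain ⟨x, hsep, htend⟩ := exists_seq_pairwise_one_le_dist_abs_of_unbounded hf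
  have hx : Continuous x := continuous_of_discreteTopology
  set h := stoneCechExtend (continuous_stoneCechUnit.comp hx)
  have hemb : IsClosedEmbedding h := (continuous_stoneCechExtend _).isClosedEmbedding
    (injective_stoneCechExtend_of_forall_exists_comp_eq hx
      (exists_comp_eq_of_pairwise_le_dist (continuous_abs.comp f.continuous) one_pos hsep))
  have hout : ∀ p ∉ range stoneCechUnit, h p ∉ upsilon X := by
    intro p hp hpυ
    obtain ⟨r, hr⟩ := hpυ f
    have hinfty : fstar f (h p) = OnePoint.infty := by
      rw [fstar, ← comp_apply (f := stoneCechExtend _), stoneCechExtend_comp_stoneCechExtend hx]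
      exact stoneCechExtend_eq_of_clusterPt _ (clusterPt_map_stoneCechUnit_cofinite hp)
        (tendsto_coe_infty_of_tendsto_abs_atTop (Nat.cofinite_eq_atTop ▸ htend))
    exact OnePoint.coe_ne_infty r (hr.symm.trans hinfty)
  exact ⟨codRestrict (h ∘ Subtype.val) _ fun p => hout p.1 p.2,
    (hemb.isEmbedding.comp IsEmbedding.subtypeVal).codRestrict _ _⟩

theorem statement5_general
    (hX : ∃ f : C(X, ℝ), ¬ ∃ M : ℝ, ∀ x : X, |f x| ≤ M) :
    (∃ e : ((Set.range (stoneCechUnit : ℕ → StoneCech ℕ))ᶜ : Set (StoneCech ℕ)) →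
        ((upsilon X)ᶜ : Set (StoneCech X)), Topology.IsEmbedding e) ∧
    2 ^ Cardinal.continuum ≤ Cardinal.mk ((upsilon X)ᶜ : Set (StoneCech X)) := by
  obtain ⟨f, hf⟩ := hX
  obtain ⟨e, he⟩ := exists_isEmbedding_compl_range_stoneCechUnit_compl_upsilon hf
  refine ⟨⟨e, he⟩, ?_⟩
  calc 2 ^ 𝔠 = lift (2 ^ 𝔠) := by rw [lift_two_power, lift_continuum]
    _ ≤ lift #((range (stoneCechUnit : ℕ → StoneCech ℕ))ᶜ : Set (StoneCech ℕ)) :=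
      lift_le.2 two_pow_continuum_le_mk_compl_range_stoneCechUnit
    _ ≤ lift.{0} #((upsilon X)ᶜ : Set (StoneCech X)) :=
      lift_mk_le_lift_mk_of_injective he.injective
    _ = _ := lift_uzero _

/-- If `X` is a completely regular Hausdorff space which is not pseudocompact, then
`βX \ υX` contains a homeomorphic copy of `βℕ \ ℕ`, and consequently
`|βX \ υX| ≥ 2^𝔠`. -/
theorem statement5 [T2Space X] [CompletelyRegularSpace X]
    (hX : ∃ f : C(X, ℝ), ¬ ∃ M : ℝ, ∀ x : X, |f x| ≤ M) :
    (∃ e : ((Set.range (stoneCechUnit : ℕ → StoneCech ℕ))ᶜ : Set (StoneCech ℕ)) →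
        ((upsilon X)ᶜ : Set (StoneCech X)), Topology.IsEmbedding e) ∧
    2 ^ Cardinal.continuum ≤ Cardinal.mk ((upsilon X)ᶜ : Set (StoneCech X)) :=
  statement5_general hX
end

section
/- If X is a first countable completely regular Hausdorff space and {U_n}_{n=1}^∞ is a countable local base at a point x in X, then {cl_{βX} U_n : n ∈ ℕ} is a countable local base at x in the space βX; hence βX is first countable at every point of X. -/
open Filter Topology

theorem IsDenseInducing.isCountablyGenerated_nhds {α β : Type*} [TopologicalSpace α]
    [TopologicalSpace β] [RegularSpace β] {f : α → β} (hf : IsDenseInducing f) (x : α)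
    [(𝓝 x).IsCountablyGenerated] : (𝓝 (f x)).IsCountablyGenerated :=
  let ⟨_, hV⟩ := (𝓝 x).exists_antitone_basis
  (hV.toHasBasis.hasBasis_of_isDenseInducing hf).isCountablyGenerated

theorem statement6_general {X : Type*} [TopologicalSpace X] [CompletelyRegularSpace X]
    [FirstCountableTopology X] (x : X) (U : ℕ → Set X)
    (hU : (𝓝 x).HasBasis (fun _ : ℕ => True) U) :
    (𝓝 (stoneCechUnit x)).HasBasis (fun _ : ℕ => True)
      (fun n => closure (stoneCechUnit '' U n)) ∧
    ∀ y : X, (𝓝 (stoneCechUnit y)).IsCountablyGenerated :=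
  ⟨hU.hasBasis_of_isDenseInducing isDenseInducing_stoneCechUnit,
    fun y => isDenseInducing_stoneCechUnit.isCountablyGenerated_nhds y⟩

/-- If `X` is a first countable completely regular Hausdorff space and `(U n)` is a countable
local base at `x ∈ X`, then the closures `cl_{βX} U n` form a countable local base at `x` in
`βX`; hence `βX` is first countable at every point of `X`. -/
theorem statement6 {X : Type*} [TopologicalSpace X] [T2Space X] [CompletelyRegularSpace X]
    [FirstCountableTopology X] (x : X) (U : ℕ → Set X)
    (hU : (𝓝 x).HasBasis (fun _ : ℕ => True) U) :
    (𝓝 (stoneCechUnit x)).HasBasis (fun _ : ℕ => True)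
      (fun n => closure (stoneCechUnit '' U n)) ∧
    ∀ y : X, (𝓝 (stoneCechUnit y)).IsCountablyGenerated :=
  statement6_general x U hU
end

section
/- If X is a first countable completely regular Hausdorff space, then every homeomorphism φ of βX onto itself maps X onto X, i.e., φ(X) = X; this is because every point of X is a Gδ-point of βX while no point of βX \ X is a Gδ-point of βX. -/
/-!
A point `x` of `X` has a countable neighbourhood basis `U n`. Since `X` is densely embedded in
the regular space `βX`, the closures in `βX` of the `U n` form a neighbourhood basis of `x` there,
so `x` is a `Gδ`-point of `βX`.

Conversely, let `p ∈ βX \ X` be a `Gδ`-point. Urysohn gives `f : βX → [0, 1]` with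
`f ⁻¹' {1} = {p}`, so `f < 1` on `X` while `1` is a limit of values `f (x n)` along a strictly
increasing sequence. The even and odd terms of that sequence are disjoint closed subsets of
`(-∞, 1)`, so Urysohn's lemma there gives a continuous `h` with `h ∘ f : X → [0, 1]` equal to `0`
at the points `x (2n)` and to `1` at the points `x (2n + 1)`. By compactness `p` lies in the
closures of both sets of points, so the extension of `h ∘ f` to `βX` would be both `0` and `1`
at `p`.

A homeomorphism of `βX` preserves `Gδ`-points, hence preserves `X`.
-/

open Filter Topology Set unitInterval

theorem isGδ_singleton_of_isCountablyGenerated {Y : Type*} [TopologicalSpace Y] [T1Space Y]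
    (y : Y) [(𝓝 y).IsCountablyGenerated] : IsGδ ({y} : Set Y) := by
  obtain ⟨U, hU, hbasis⟩ := (nhds_basis_opens y).exists_antitone_subbasis
  rw [← biInter_basis_nhds hbasis.toHasBasis]
  exact .biInter (to_countable _) fun n _ => (hU n).2.isGδ

theorem Homeomorph.isGδ_singleton_apply_iff {Y Z : Type*} [TopologicalSpace Y]
    [TopologicalSpace Z] (φ : Y ≃ₜ Z) (y : Y) : IsGδ ({φ y} : Set Z) ↔ IsGδ ({y} : Set Y) := by
  refine ⟨fun h => ?_, fun h => ?_⟩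
  · simpa only [← image_singleton, φ.preimage_image] using h.preimage φ.continuous
  · simpa only [φ.preimage_symm, image_singleton] using h.preimage φ.symm.continuous

theorem Homeomorph.image_setOf_isGδ_singleton {Y Z : Type*} [TopologicalSpace Y]
    [TopologicalSpace Z] (φ : Y ≃ₜ Z) :
    φ '' {y | IsGδ ({y} : Set Y)} = {z | IsGδ ({z} : Set Z)} := by
  ext z
  obtain ⟨y, rfl⟩ := φ.surjective z
  simp [φ.injective.mem_set_image, φ.isGδ_singleton_apply_iff]

theorem mem_closure_of_mem_closure_image {K Y : Type*} [TopologicalSpace K] [CompactSpace K]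
    [TopologicalSpace Y] [T2Space Y] {g : K → Y} (hg : Continuous g) {p : K} {y : Y}
    (hp : g ⁻¹' {y} ⊆ {p}) {S : Set K} (hS : y ∈ closure (g '' S)) : p ∈ closure S := by
  have hclosed : closure (g '' S) ⊆ g '' closure S :=
    closure_minimal (image_mono subset_closure) (isClosed_closure.isCompact.image hg).isClosed
  obtain ⟨q, hq, rfl⟩ := hclosed hS
  rwa [hp rfl] at hq

theorem exists_continuousOn_Iio_eq_zero_even_eq_one_odd {t : ℕ → ℝ} {a : ℝ}
    (ht : StrictMono t) (hlim : Tendsto t atTop (𝓝 a)) :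
    ∃ h : ℝ → I, ContinuousOn h (Iio a) ∧ ∀ n, h (t (2 * n)) = 0 ∧ h (t (2 * n + 1)) = 1 := by
  have hlt : ∀ n, t n < a := fun n => (ht (Nat.lt_succ_self n)).trans_le
    (ht.monotone.ge_of_tendsto hlim (n + 1))
  let E : ℕ → Set (Iio a) := fun k => Subtype.val ⁻¹' range fun n => t (2 * n + k)
  have hE_closed : ∀ k, IsClosed (E k) := by
    intro k
    have hsub : Tendsto (fun n => t (2 * n + k)) atTop (𝓝 a) :=
      hlim.comp (StrictMono.tendsto_atTop fun m n hmn => by omega)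
    have hE : E k = Subtype.val ⁻¹' insert a (range fun n => t (2 * n + k)) := by
      ext ⟨s, hs⟩
      simp [E, (ne_of_lt (mem_Iio.1 hs))]
    rw [hE]
    exact hsub.isCompact_insert_range.isClosed.preimage continuous_subtype_val
  have hE_disjoint : Disjoint (E 0) (E 1) := by
    rw [Set.disjoint_left]
    intro s ⟨m, hm⟩ ⟨n, hn⟩
    have := ht.injective (hn.trans hm.symm)
    omega
  obtain ⟨f, hf0, hf1, hf01⟩ :=
    exists_continuous_zero_one_of_isClosed (hE_closed 0) (hE_closed 1) hE_disjoint
  refine ⟨fun s => if hs : s < a then ⟨f ⟨s, hs⟩, hf01 _⟩ else 0, ?_, fun n => ⟨?_, ?_⟩⟩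
  · rw [continuousOn_iff_continuous_domRestrict]
    convert (f.continuous.subtype_mk hf01) using 1
    ext ⟨s, hs⟩
    simp [mem_Iio.1 hs]
  · simpa [hlt, Subtype.ext_iff] using hf0 (show ⟨t (2 * n), hlt _⟩ ∈ E 0 from ⟨n, rfl⟩)
  · simpa [hlt, Subtype.ext_iff] using hf1 (show ⟨t (2 * n + 1), hlt _⟩ ∈ E 1 from ⟨n, rfl⟩)

section StoneCech

variable {X : Type*} [TopologicalSpace X]

theorem disjoint_closure_image_stoneCechUnit {Y : Type*} [TopologicalSpace Y] [T2Space Y]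
    [CompactSpace Y] {f : X → Y} (hf : Continuous f) {A B : Set X} {s t : Set Y}
    (hs : IsClosed s) (ht : IsClosed t) (hst : Disjoint s t) (hA : MapsTo f A s)
    (hB : MapsTo f B t) :
    Disjoint (closure (stoneCechUnit '' A)) (closure (stoneCechUnit '' B)) := by
  have hclosure : ∀ {C : Set X} {u : Set Y}, IsClosed u → MapsTo f C u →
      closure (stoneCechUnit '' C) ⊆ stoneCechExtend hf ⁻¹' u := fun hu hC =>
    closure_minimal (image_subset_iff.2 fun c hc => by
        simpa only [mem_preimage, stoneCechExtend_stoneCechUnit] using hC hc)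
      (hu.preimage (continuous_stoneCechExtend hf))
  exact (hst.preimage _).mono (hclosure hs hA) (hclosure ht hB)

theorem isGδ_singleton_stoneCechUnit [CompletelyRegularSpace X] (x : X)
    [(𝓝 x).IsCountablyGenerated] : IsGδ ({stoneCechUnit x} : Set (StoneCech X)) := by
  obtain ⟨U, hU⟩ := (𝓝 x).exists_antitone_basis
  have := (hU.toHasBasis.hasBasis_of_isDenseInducing
    isDenseInducing_stoneCechUnit).isCountablyGenerated
  exact isGδ_singleton_of_isCountablyGenerated _

theorem not_isGδ_singleton_of_notMem_range {p : StoneCech X}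
    (hp : p ∉ range (stoneCechUnit : X → StoneCech X)) : ¬ IsGδ ({p} : Set (StoneCech X)) := by
  intro hGδ
  obtain ⟨f, hfp, -, -, hf01⟩ := exists_continuous_one_zero_of_isCompact_of_isGδ
    isCompact_singleton hGδ isClosed_empty (disjoint_empty _)
  set u : X → ℝ := f ∘ stoneCechUnit
  have hu_lt : ∀ x, u x < 1 := fun x => (hf01 _).2.lt_of_ne fun hx =>
    hp ⟨x, by rw [← mem_singleton_iff, hfp]; exact hx⟩
  have hu_lub : IsLUB (range u) 1 := by
    refine isLUB_of_mem_closure (forall_mem_range.2 fun x => (hu_lt x).le) ?_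
    have hfp1 : f p = 1 := hfp.subset rfl
    rw [← hfp1, range_comp]
    exact image_closure_subset_closure_image f.continuous
      (mem_image_of_mem f (denseRange_stoneCechUnit p))
  obtain ⟨t, ht_mono, -, ht_lim, ht_mem⟩ :=
    hu_lub.exists_seq_strictMono_tendsto_of_notMem (fun ⟨x, hx⟩ => (hu_lt x).ne hx)
      (range_nonempty_iff_nonempty.2 (denseRange_stoneCechUnit.nonempty_iff.2 ⟨p⟩))
  choose x hx using ht_mem
  obtain ⟨h, hh_cont, hh⟩ := exists_continuousOn_Iio_eq_zero_even_eq_one_odd ht_mono ht_lim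
  have hw : Continuous (h ∘ u) :=
    hh_cont.comp_continuous (f.continuous.comp continuous_stoneCechUnit) hu_lt
  have hp_mem : ∀ k : ℕ, p ∈ closure (stoneCechUnit '' range fun n => x (2 * n + k)) := by
    intro k
    refine mem_closure_of_mem_closure_image f.continuous hfp.symm.subset ?_
    rw [← image_comp, ← range_comp]
    have hsub : Tendsto (fun n => t (2 * n + k)) atTop (𝓝 1) :=
      ht_lim.comp (StrictMono.tendsto_atTop fun m n hmn => by omega)
    exact mem_closure_of_tendsto (hsub.congr fun n => (hx _).symm)
      (Eventually.of_forall fun n => mem_range_self n)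
  refine (disjoint_closure_image_stoneCechUnit hw isClosed_singleton isClosed_singleton
    (disjoint_singleton.2 zero_ne_one) ?_ ?_).notMem_of_mem_left (hp_mem 0) (hp_mem 1)
  · rintro _ ⟨n, rfl⟩
    exact (congrArg h (hx _)).trans (hh n).1
  · rintro _ ⟨n, rfl⟩
    exact (congrArg h (hx _)).trans (hh n).2

theorem range_stoneCechUnit_eq_setOf_isGδ [CompletelyRegularSpace X] [FirstCountableTopology X] :
    range (stoneCechUnit : X → StoneCech X) = {p | IsGδ ({p} : Set (StoneCech X))} :=
  Subset.antisymm (range_subset_iff.2 fun x => isGδ_singleton_stoneCechUnit x) fun _ hp =>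
    not_not.1 fun hnot => not_isGδ_singleton_of_notMem_range hnot hp

end StoneCech

theorem statement7_general {X : Type*} [TopologicalSpace X] [CompletelyRegularSpace X]
    [FirstCountableTopology X] :
    (∀ x : X, IsGδ ({stoneCechUnit x} : Set (StoneCech X))) ∧
    (∀ p : StoneCech X, p ∉ Set.range (stoneCechUnit : X → StoneCech X) →
      ¬ IsGδ ({p} : Set (StoneCech X))) ∧
    (∀ φ : StoneCech X ≃ₜ StoneCech X,
      φ '' Set.range (stoneCechUnit : X → StoneCech X) =
        Set.range (stoneCechUnit : X → StoneCech X)) := by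
  refine ⟨fun x => isGδ_singleton_stoneCechUnit x, fun _ => not_isGδ_singleton_of_notMem_range,
    fun φ => ?_⟩
  rw [range_stoneCechUnit_eq_setOf_isGδ]
  exact φ.image_setOf_isGδ_singleton

/-- If `X` is a first countable completely regular Hausdorff space, then every point of `X`
is a `Gδ`-point of `βX`, no point of `βX \ X` is a `Gδ`-point of `βX`, and consequently every
self-homeomorphism `φ` of `βX` satisfies `φ(X) = X`. -/
theorem statement7 {X : Type*} [TopologicalSpace X] [T2Space X] [CompletelyRegularSpace X]
    [FirstCountableTopology X] :
    (∀ x : X, IsGδ ({stoneCechUnit x} : Set (StoneCech X))) ∧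
    (∀ p : StoneCech X, p ∉ Set.range (stoneCechUnit : X → StoneCech X) →
      ¬ IsGδ ({p} : Set (StoneCech X))) ∧
    (∀ φ : StoneCech X ≃ₜ StoneCech X,
      φ '' Set.range (stoneCechUnit : X → StoneCech X) =
        Set.range (stoneCechUnit : X → StoneCech X)) :=
  statement7_general
end

section
/- Define a relation on βℕ \ ℕ by p ∼ q if and only if there exists a permutation σ of ℕ whose continuous extension σ* : βℕ → βℕ satisfies σ*(p) = q. Then ∼ is an equivalence relation on βℕ \ ℕ, and (Frolík) there exist exactly 2^c equivalence classes (types of ultrafilters on ℕ); in particular there is a subset S of βℕ \ ℕ with |S| = 2^c containing exactly one member of each type. -/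
/-!
A type of ultrafilters is an orbit under the `𝔠` permutations of `ℕ`, so it has at most `𝔠`
members; since `βℕ \ ℕ` has `2 ^ 𝔠` points, there are `2 ^ 𝔠` types. The lower bound
`#βℕ ≥ 2 ^ 𝔠` comes from Hausdorff's independent family `A_X = {(s, 𝒜) | s ∩ X ∈ 𝒜}`, `X ⊆ ℕ`,
of subsets of the countable set `Finset ℕ × Finset (Finset ℕ)`: every finite Boolean
combination of the `A_X` is nonempty, so each `𝒮 ⊆ 𝒫 ℕ` yields an ultrafilter containing
exactly those `A_X` with `X ∈ 𝒮`.
-/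

open Filter Topology

/-- The continuous extension `σ* : βℕ → βℕ` of a permutation `σ` of `ℕ`. -/
noncomputable def permExt (σ : Equiv.Perm ℕ) : StoneCech ℕ → StoneCech ℕ :=
  stoneCechExtend (show Continuous (fun n : ℕ => stoneCechUnit (σ n)) from
    continuous_of_discreteTopology)

open Cardinal Set

universe u

theorem Setoid.mk_quotient_eq_of_mk_class_le {α : Type u} (r : Setoid α) {μ : Cardinal}
    (hα : ℵ₀ ≤ #α) (hμ : μ < #α) (hr : ∀ a, #{b // r a b} ≤ μ) : #(Quotient r) = #α := by
  refine mk_quotient_le.antisymm (not_lt.1 fun hlt => ?_)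
  have hfiber : ∀ q : Quotient r, #(Quotient.mk r ⁻¹' {q}) ≤ μ := by
    rintro ⟨a⟩
    refine (mk_congr (Equiv.subtypeEquivRight fun b => ?_)).trans_le (hr a)
    exact Quotient.eq.trans ⟨r.iseqv.symm, r.iseqv.symm⟩
  exact (mk_le_mk_mul_of_mk_preimage_le _ hfiber).not_gt (mul_lt_of_lt hα hlt hμ)

theorem Setoid.exists_transversal {α : Type u} (r : Setoid α) :
    ∃ S : Set α, #S = #(Quotient r) ∧ ∀ a, ∃! s, s ∈ S ∧ r s a := by
  refine ⟨range Quotient.out, mk_range_eq _ Quotient.out_injective, fun a =>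
    ⟨(⟦a⟧ : Quotient r).out, ⟨mem_range_self _, Quotient.mk_out a⟩, ?_⟩⟩
  rintro _ ⟨⟨q, rfl⟩, h⟩
  rw [← Quotient.sound h, Quotient.out_eq]

section HausdorffFamily

variable {α : Type u}

lemma exists_finset_separating {𝒳 : Set (Set α)} (h𝒳 : 𝒳.Finite) :
    ∃ s : Finset α, ∀ X ∈ 𝒳, ∀ Y ∈ 𝒳, (∀ a ∈ s, a ∈ X ↔ a ∈ Y) → X = Y := by
  classical
  have hpair : ∀ X Y : Set α, ∃ t : Finset α, (∀ a ∈ t, a ∈ X ↔ a ∈ Y) → X = Y := by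
    intro X Y
    by_cases hXY : X = Y
    · exact ⟨∅, fun _ => hXY⟩
    · obtain ⟨a, ha⟩ : ∃ a, ¬(a ∈ X ↔ a ∈ Y) := by
        by_contra! h
        exact hXY (Set.ext h)
      exact ⟨{a}, fun h => (ha (h a (Finset.mem_singleton_self a))).elim⟩
  choose t ht using hpair
  refine ⟨(h𝒳.toFinset ×ˢ h𝒳.toFinset).biUnion fun q => t q.1 q.2,
    fun X hX Y hY hs => ht X Y fun a ha => hs a ?_⟩
  exact Finset.mem_biUnion.2 ⟨(X, Y), by simp [hX, hY], ha⟩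

open scoped Classical in
def hausdorffSet (X : Set α) : Set (Finset α × Finset (Finset α)) :=
  {p | p.1.filter (· ∈ X) ∈ p.2}

lemma exists_mem_hausdorffSet_iff {𝒳 : Set (Set α)} (h𝒳 : 𝒳.Finite) (𝒮 : Set (Set α)) :
    ∃ p, ∀ X ∈ 𝒳, p ∈ hausdorffSet X ↔ X ∈ 𝒮 := by
  classical
  obtain ⟨s, hs⟩ := exists_finset_separating h𝒳
  refine ⟨(s, (h𝒳.inter_of_left 𝒮).toFinset.image fun Y => s.filter (· ∈ Y)), fun X hX => ?_⟩
  change _ ∈ Finset.image _ _ ↔ _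
  simp only [Finset.mem_image, Finite.mem_toFinset, mem_inter_iff]
  constructor
  · rintro ⟨Y, ⟨hY, hY𝒮⟩, hYX⟩
    rwa [hs Y hY X hX fun a ha => by simpa [ha] using congrArg (a ∈ ·) hYX] at hY𝒮
  · exact fun hX𝒮 => ⟨X, ⟨hX, hX𝒮⟩, rfl⟩

lemma exists_ultrafilter_mem_hausdorffSet_iff (𝒮 : Set (Set α)) :
    ∃ u : Ultrafilter (Finset α × Finset (Finset α)), ∀ X, hausdorffSet X ∈ u ↔ X ∈ 𝒮 := by
  classical
  let G X := if X ∈ 𝒮 then hausdorffSet X else (hausdorffSet X)ᶜ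
  have : (⨅ X, 𝓟 (G X)).NeBot := (hasBasis_iInf_principal_finite G).neBot_iff.2 fun {𝒳} h𝒳 => by
    obtain ⟨p, hp⟩ := exists_mem_hausdorffSet_iff h𝒳 𝒮
    refine ⟨p, mem_iInter₂.2 fun X hX => ?_⟩
    by_cases hX𝒮 : X ∈ 𝒮 <;> simp [G, hX𝒮, hp X hX]
  obtain ⟨u, hu⟩ := Ultrafilter.exists_le (⨅ X, 𝓟 (G X))
  refine ⟨u, fun X => ?_⟩
  have hGX : G X ∈ u := hu (mem_iInf_of_mem X (mem_principal_self _))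
  by_cases hX𝒮 : X ∈ 𝒮
  · simpa [G, hX𝒮] using hGX
  · simpa [G, hX𝒮, Ultrafilter.compl_mem_iff_notMem] using hGX

end HausdorffFamily

theorem mk_set_set_le_mk_ultrafilter (α : Type u) :
    #(Set (Set α)) ≤ #(Ultrafilter (Finset α × Finset (Finset α))) := by
  choose u hu using exists_ultrafilter_mem_hausdorffSet_iff (α := α)
  refine mk_le_of_injective (f := u) fun 𝒮 𝒯 h => Set.ext fun X => ?_
  rw [← hu, ← hu, h]

theorem mk_ultrafilter_le (α : Type u) : #(Ultrafilter α) ≤ #(Set (Set α)) :=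
  mk_le_of_injective fun _ _ h => Ultrafilter.coe_injective (Filter.filter_eq h)

theorem mk_ultrafilter_of_infinite (α : Type u) [Infinite α] :
    #(Ultrafilter α) = #(Set (Set α)) := by
  refine (mk_ultrafilter_le α).antisymm ?_
  obtain ⟨e⟩ : Nonempty (Finset α × Finset (Finset α) ≃ α) := Cardinal.eq.1 <| by
    simp [mk_finset_of_infinite]
  calc #(Set (Set α)) ≤ #(Ultrafilter (Finset α × Finset (Finset α))) :=
        mk_set_set_le_mk_ultrafilter α
    _ ≤ #(Ultrafilter α) := mk_le_of_injective (f := Ultrafilter.map e) fun u v h =>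
        Ultrafilter.coe_injective <| Filter.map_injective e.injective <| by
          simpa only [Ultrafilter.coe_map] using congrArg ((↑) : Ultrafilter α → Filter α) h

noncomputable def stoneCechEquivUltrafilter (α : Type u) [TopologicalSpace α]
    [DiscreteTopology α] : StoneCech α ≃ Ultrafilter α where
  toFun := stoneCechExtend (continuous_of_discreteTopology (f := pure))
  invFun := Ultrafilter.extend stoneCechUnit
  left_inv := congrFun <| stoneCech_hom_ext
    ((continuous_ultrafilter_extend _).comp (continuous_stoneCechExtend _)) continuous_id <| by
      ext a
      simp [stoneCechExtend_stoneCechUnit, ultrafilter_extend_pure]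
  right_inv := congrFun <| ((continuous_stoneCechExtend _).comp
    (continuous_ultrafilter_extend _)).ext_on denseRange_pure continuous_id <| by
      rintro _ ⟨a, rfl⟩
      simp [stoneCechExtend_stoneCechUnit, ultrafilter_extend_pure]

theorem mk_stoneCech_nat : #(StoneCech ℕ) = 2 ^ 𝔠 := by
  rw [mk_congr (stoneCechEquivUltrafilter ℕ), mk_ultrafilter_of_infinite, mk_set, mk_set, mk_nat,
    two_power_aleph0]

lemma aleph0_lt_two_power_continuum : ℵ₀ < 2 ^ 𝔠 :=
  aleph0_lt_continuum.trans (cantor 𝔠)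

theorem mk_stoneCech_nat_remainder :
    #((range (stoneCechUnit : ℕ → StoneCech ℕ))ᶜ : Set (StoneCech ℕ)) = 2 ^ 𝔠 := by
  have : Infinite (StoneCech ℕ) :=
    infinite_iff.2 (mk_stoneCech_nat ▸ aleph0_lt_two_power_continuum.le)
  rw [mk_compl_of_infinite _ ((mk_range_le.trans_eq mk_nat).trans_lt
    (mk_stoneCech_nat ▸ aleph0_lt_two_power_continuum)), mk_stoneCech_nat]

lemma permExt_stoneCechUnit (σ : Equiv.Perm ℕ) (n : ℕ) :
    permExt σ (stoneCechUnit n) = stoneCechUnit (σ n) :=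
  stoneCechExtend_stoneCechUnit _ n

lemma continuous_permExt (σ : Equiv.Perm ℕ) : Continuous (permExt σ) :=
  continuous_stoneCechExtend _

lemma permExt_one : permExt 1 = id :=
  stoneCech_hom_ext (continuous_permExt 1) continuous_id <| by
    ext n
    simp [permExt_stoneCechUnit]

lemma permExt_mul (σ τ : Equiv.Perm ℕ) : permExt (σ * τ) = permExt σ ∘ permExt τ :=
  stoneCech_hom_ext (continuous_permExt _)
    ((continuous_permExt σ).comp (continuous_permExt τ)) <| by
    ext n
    simp [permExt_stoneCechUnit]

lemma permExt_mul_apply (σ τ : Equiv.Perm ℕ) (p : StoneCech ℕ) :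
    permExt (σ * τ) p = permExt σ (permExt τ p) :=
  congrFun (permExt_mul σ τ) p

lemma equivalence_permExt (s : Set (StoneCech ℕ)) :
    Equivalence fun p q : s => ∃ σ : Equiv.Perm ℕ, permExt σ p = q where
  refl p := ⟨1, congrFun permExt_one p⟩
  symm := by
    rintro p q ⟨σ, hσ⟩
    exact ⟨σ⁻¹, by rw [← hσ, ← permExt_mul_apply, inv_mul_cancel, permExt_one, id]⟩
  trans := by
    rintro p q r ⟨σ, hσ⟩ ⟨τ, hτ⟩
    exact ⟨τ * σ, by rw [permExt_mul_apply, hσ, hτ]⟩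

lemma mk_permExt_orbit_le {s : Set (StoneCech ℕ)} (p : s) :
    #{q : s // ∃ σ : Equiv.Perm ℕ, permExt σ p = q} ≤ 𝔠 := by
  refine (mk_le_of_injective (f := fun q => q.2.choose) fun q q' h => ?_).trans_eq ?_
  · have h' : q.2.choose = q'.2.choose := h
    exact Subtype.ext <| Subtype.ext <| q.2.choose_spec.symm.trans (h' ▸ q'.2.choose_spec)
  · rw [mk_perm_eq_two_power, mk_nat, two_power_aleph0]

/-- The relation `p ∼ q ↔ σ*(p) = q` for some permutation `σ` of `ℕ` is an equivalence
relation on `βℕ \ ℕ`, and (Frolík) there are exactly `2^𝔠` equivalence classes (types of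
ultrafilters on `ℕ`): there is a set `S ⊆ βℕ \ ℕ` of cardinality `2^𝔠` containing exactly one
member of each type. -/
theorem statement12 :
    Equivalence (fun p q : ((Set.range (stoneCechUnit : ℕ → StoneCech ℕ))ᶜ : Set (StoneCech ℕ)) =>
      ∃ σ : Equiv.Perm ℕ, permExt σ (p : StoneCech ℕ) = (q : StoneCech ℕ)) ∧
    ∃ S : Set ((Set.range (stoneCechUnit : ℕ → StoneCech ℕ))ᶜ : Set (StoneCech ℕ)),
      Cardinal.mk S = 2 ^ Cardinal.continuum ∧
      ∀ p : ((Set.range (stoneCechUnit : ℕ → StoneCech ℕ))ᶜ : Set (StoneCech ℕ)),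
        ∃! s, s ∈ S ∧ ∃ σ : Equiv.Perm ℕ, permExt σ (s : StoneCech ℕ) = (p : StoneCech ℕ) := by
  let r : Setoid ((range (stoneCechUnit : ℕ → StoneCech ℕ))ᶜ : Set (StoneCech ℕ)) :=
    ⟨_, equivalence_permExt _⟩
  have hcard : #(Quotient r) = 2 ^ 𝔠 := by
    have hremainder := mk_stoneCech_nat_remainder
    rw [← hremainder]
    exact r.mk_quotient_eq_of_mk_class_le (hremainder ▸ aleph0_lt_two_power_continuum.le)
      (hremainder ▸ cantor 𝔠) mk_permExt_orbit_le
  obtain ⟨S, hS, hS_transversal⟩ := r.exists_transversal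
  exact ⟨r.iseqv, S, hS.trans hcard, hS_transversal⟩
end
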